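/- Let n ≥ 1. Then the Gutman index of the strong prism B_n² of the linear polyomino chain with n squares satisfies Gut(B_n²) = (392/3)n³ + 364n² + (1102/3)n + 38. -/

import Mathlib

/-- The linear polyomino chain `B_n`, with vertices `u_i = (i, false)` and
`v_i = (i, true)` for `0 ≤ i ≤ n`, edges `u_i u_{i+1}`, `v_i v_{i+1}` and `u_i v_i`. -/
def Bgraph (n : ℕ) : SimpleGraph (Fin (n+1) × Bool) :=
  SimpleGraph.fromRel (fun x y => (x.2 = y.2 ∧ x.1.val + 1 = y.1.val) ∨ (x.1 = y.1))

/-- The strong prism `G ⊠ K₂`: distinct `(x, s)` and `(y, t)` are adjacent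
iff `x = y` or `x` is adjacent to `y` in `G`. -/
def strongPrism {V : Type*} (G : SimpleGraph V) : SimpleGraph (V × Bool) :=
  SimpleGraph.fromRel (fun x y => x.1 = y.1 ∨ G.Adj x.1 y.1)

open scoped Classical in
/-- The Gutman index `Gut(G) = ∑_{{u,w}} d(u)·d(w)·dist(u,w)`, the sum over all
unordered pairs of distinct vertices (written as half of the ordered double sum,
since `dist u u = 0`). -/
noncomputable def gutmanIndex {V : Type*} [Fintype V] (G : SimpleGraph V) : ℝ :=
  (∑ u : V, ∑ w : V, (G.degree u : ℝ) * (G.degree w) * (G.dist u w)) / 2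

/-!
In `B_n² = (P_{n+1} □ K₂) ⊠ K₂` the vertex `((i, b), s)` has degree `5` on the two end rungs
`i ∈ {0, n}` and `7` elsewhere, and the distance between `((i, b), s)` and `((j, c), t)` is
`|i - j| + [b ≠ c]`, except that two distinct vertices differing only in `s` are at distance `1`.
Summing over the three `Bool` coordinates reduces `Gut(B_n²)` to sums of `|i - j|` over
`{0, …, n}` weighted by `7 - 2[i = 0] - 2[i = n]`; expanding the weights leaves the classical
sums `∑ i = n(n+1)/2` and `∑∑ |i - j| = (n+1)((n+1)² - 1)/3`.
-/

open Finset

namespace SimpleGraph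

variable {V : Type*} {G : SimpleGraph V}

theorem le_length_of_potential {w : V} (f : V → ℕ) (hw : f w = 0)
    (hle : ∀ ⦃u v⦄, G.Adj u v → f u ≤ f v + 1) {v : V} (p : G.Walk v w) : f v ≤ p.length := by
  induction p with
  | nil => simp [hw]
  | cons h p ih =>
    have := hle h
    rw [Walk.length_cons]
    omega

theorem exists_walk_length_eq_potential {w : V} (f : V → ℕ) (hw : f w = 0)
    (hdesc : ∀ v ≠ w, ∃ u, G.Adj v u ∧ f u + 1 = f v) (v : V) :
    ∃ p : G.Walk v w, p.length = f v := by
  induction hk : f v generalizing v with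
  | zero =>
    obtain rfl : v = w := by
      by_contra hne
      obtain ⟨u, -, hu⟩ := hdesc v hne
      omega
    exact ⟨.nil, rfl⟩
  | succ k ih =>
    obtain ⟨u, hvu, hu⟩ := hdesc v (by rintro rfl; omega)
    obtain ⟨p, hp⟩ := ih u (by omega)
    exact ⟨.cons hvu p, by rw [Walk.length_cons, hp]⟩

theorem dist_eq_of_potential {w : V} (f : V → ℕ) (hw : f w = 0)
    (hle : ∀ ⦃u v⦄, G.Adj u v → f u ≤ f v + 1)
    (hdesc : ∀ v ≠ w, ∃ u, G.Adj v u ∧ f u + 1 = f v) (v : V) : G.dist v w = f v := by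
  obtain ⟨p, hp⟩ := exists_walk_length_eq_potential f hw hdesc v
  obtain ⟨q, hq⟩ := p.reachable.exists_walk_length_eq_dist
  exact le_antisymm (hp ▸ dist_le p) (hq ▸ le_length_of_potential f hw hle q)

theorem Reachable.exists_adj_dist_add_one_eq {v w : V} (h : G.Reachable v w) (hne : v ≠ w) :
    ∃ u, G.Adj v u ∧ G.dist u w + 1 = G.dist v w := by
  obtain ⟨p, hp⟩ := h.exists_walk_length_eq_dist
  cases p with
  | nil => exact absurd rfl hne
  | cons hvu q =>
    refine ⟨_, hvu, le_antisymm ?_ ?_⟩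
    · rw [← hp, Walk.length_cons]
      exact Nat.add_le_add_right (dist_le q) 1
    · have := hvu.reachable.dist_triangle_left w
      rw [dist_eq_one_iff_adj.mpr hvu] at this
      omega

theorem strongPrism_adj {x y : V × Bool} :
    (strongPrism G).Adj x y ↔ x ≠ y ∧ (x.1 = y.1 ∨ G.Adj x.1 y.1) := by
  rw [strongPrism, fromRel_adj]
  exact and_congr_right fun _ => by
    constructor
    · rintro ((h | h) | (h | h))
      exacts [.inl h, .inr h, .inl h.symm, .inr h.symm]
    · rintro (h | h)
      exacts [.inl (.inl h), .inl (.inr h)]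

theorem Connected.dist_strongPrism [DecidableEq V] (hG : G.Connected) (x y : V) (s t : Bool) :
    (strongPrism G).dist (x, s) (y, t) = if x = y ∧ s ≠ t then 1 else G.dist x y := by
  refine dist_eq_of_potential
    (fun z : V × Bool => if z.1 = y ∧ z.2 ≠ t then 1 else G.dist z.1 y) (by simp) ?_ ?_
    (x, s)
  · rintro ⟨z, r⟩ ⟨z', r'⟩ h
    have htri : G.dist z y ≤ G.dist z' y + 1 := by
      obtain ⟨-, heq | hadj⟩ := strongPrism_adj.mp h
      · rw [show z = z' from heq]
        omega
      · have := hG.dist_triangle (u := z) (v := z') (w := y)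
        rwa [dist_eq_one_iff_adj.mpr hadj, add_comm] at this
    have hz' : G.dist z' y ≤ if z' = y ∧ r' ≠ t then 1 else G.dist z' y := by
      split_ifs with h'
      · rw [h'.1, dist_self]
        exact zero_le_one
      · exact le_rfl
    dsimp only
    split_ifs at hz' ⊢ <;> omega
  · rintro ⟨z, r⟩ hne
    by_cases hz : z = y
    · subst hz
      have hr : r ≠ t := by rintro rfl; exact hne rfl
      exact ⟨(z, t), strongPrism_adj.mpr ⟨hne, .inl rfl⟩, by simp [hr]⟩
    · obtain ⟨z', hzz', hd⟩ := (hG z y).exists_adj_dist_add_one_eq hz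
      exact ⟨(z', t), strongPrism_adj.mpr ⟨by simp [hzz'.ne], .inr hzz'⟩, by simp [hz, hd]⟩

theorem degree_eq_ncard_neighborSet (v : V) [Fintype (G.neighborSet v)] :
    G.degree v = (G.neighborSet v).ncard := by
  rw [← card_neighborSet_eq_degree, ← Nat.card_eq_fintype_card, Nat.card_coe_set_eq]

theorem degree_strongPrism (x : V) (s : Bool) [Fintype (G.neighborSet x)]
    [Fintype ((strongPrism G).neighborSet (x, s))] :
    (strongPrism G).degree (x, s) = 2 * G.degree x + 1 := by
  have hN : (strongPrism G).neighborSet (x, s)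
      = (insert x (G.neighborSet x) ×ˢ Set.univ) \ {(x, s)} := by
    ext ⟨y, t⟩
    simp only [mem_neighborSet, strongPrism_adj, Set.mem_sdiff, Set.mem_prod, Set.mem_insert_iff,
      Set.mem_univ, and_true, Set.mem_singleton_iff]
    grind
  rw [degree_eq_ncard_neighborSet, degree_eq_ncard_neighborSet, hN,
    Set.ncard_sdiff_singleton_of_mem (by simp), Set.ncard_prod,
    Set.ncard_insert_of_notMem G.notMem_neighborSet_self (Set.toFinite _), Set.ncard_univ,
    Nat.card_eq_fintype_card, Fintype.card_bool]
  omega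

theorem Connected.sum_dist_strongPrism [DecidableEq V] (hG : G.Connected) (x y : V) :
    ∑ s : Bool, ∑ t : Bool, ((strongPrism G).dist (x, s) (y, t) : ℝ)
      = 4 * G.dist x y + if x = y then 2 else 0 := by
  by_cases h : x = y
  · subst h
    simp only [Fintype.sum_bool, hG.dist_strongPrism, dist_self, true_and, ne_eq,
      not_true_eq_false, Bool.true_eq_false, Bool.false_eq_true, not_false_eq_true, if_true,
      if_false, Nat.cast_zero, Nat.cast_one]
    norm_num
  · simp only [Fintype.sum_bool, hG.dist_strongPrism, h, false_and, if_false, add_zero]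
    ring

open scoped Classical in
theorem Connected.gutmanIndex_strongPrism [Fintype V] (hG : G.Connected) :
    gutmanIndex (strongPrism G)
      = 2 * ∑ x, ∑ y, ((2 * G.degree x + 1) * (2 * G.degree y + 1) * G.dist x y : ℝ)
        + ∑ x, (2 * G.degree x + 1 : ℝ) ^ 2 := by
  have hpair (x y : V) :
      ∑ t : Bool, ∑ s : Bool, ((strongPrism G).degree (x, s) * (strongPrism G).degree (y, t)
        * (strongPrism G).dist (x, s) (y, t) : ℝ)
      = 4 * ((2 * G.degree x + 1) * (2 * G.degree y + 1) * G.dist x y)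
        + if x = y then 2 * ((2 * G.degree x + 1 : ℝ) * (2 * G.degree y + 1)) else 0 := by
    rw [Finset.sum_comm]
    simp only [degree_strongPrism, Nat.cast_add, Nat.cast_mul, Nat.cast_ofNat, Nat.cast_one,
      ← Finset.mul_sum, hG.sum_dist_strongPrism]
    split_ifs <;> ring
  rw [gutmanIndex, Fintype.sum_prod_type, Finset.sum_congr rfl fun x _ => Finset.sum_comm]
  simp only [Fintype.sum_prod_type, hpair, Finset.sum_add_distrib, Finset.sum_ite_eq,
    Finset.mem_univ, if_true, ← Finset.mul_sum, sq]
  ring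

theorem Connected.dist_boxProd {α β : Type*} {G : SimpleGraph α} {H : SimpleGraph β}
    (hG : G.Connected) (hH : H.Connected) (x y : α × β) :
    (G □ H).dist x y = G.dist x.1 y.1 + H.dist x.2 y.2 := by
  rw [dist, dist, dist, edist_boxProd, ENat.toNat_add (edist_ne_top_iff_reachable.mpr (hG _ _))
    (edist_ne_top_iff_reachable.mpr (hH _ _))]

theorem pathGraph_dist {n : ℕ} (i j : Fin n) : (pathGraph n).dist i j = Nat.dist i j := by
  refine dist_eq_of_potential (fun k : Fin n => Nat.dist k j) (Nat.dist_self _) ?_ ?_ i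
  · intro u v h
    rw [pathGraph_adj] at h
    simp only [Nat.dist]
    omega
  · intro v hv
    have hv' : (v : ℕ) ≠ j := Fin.val_ne_of_ne hv
    rcases Nat.lt_or_gt_of_ne hv' with h | h
    · refine ⟨⟨v + 1, by omega⟩, pathGraph_adj.mpr (.inl rfl), ?_⟩
      simp only [Nat.dist]
      omega
    · refine ⟨⟨v - 1, by omega⟩, pathGraph_adj.mpr (.inr (by simp only; omega)), ?_⟩
      simp only [Nat.dist]
      omega

theorem pathGraph_degree {n : ℕ} (hn : n ≠ 0) (i : Fin (n + 1))
    [Fintype ((pathGraph (n + 1)).neighborSet i)] :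
    (pathGraph (n + 1)).degree i = if (i : ℕ) = 0 ∨ (i : ℕ) = n then 1 else 2 := by
  rw [degree_eq_ncard_neighborSet]
  have hi := i.isLt
  split_ifs with h
  · rw [Set.ncard_eq_one]
    refine ⟨⟨if (i : ℕ) = 0 then 1 else n - 1, by split_ifs <;> omega⟩, ?_⟩
    ext j
    simp only [mem_neighborSet, pathGraph_adj, Set.mem_singleton_iff, Fin.ext_iff]
    split_ifs <;> omega
  · rw [Set.ncard_eq_two]
    refine ⟨⟨i - 1, by omega⟩, ⟨i + 1, by omega⟩, by simp [Fin.ext_iff], ?_⟩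
    ext j
    simp only [mem_neighborSet, pathGraph_adj, Set.mem_insert_iff, Set.mem_singleton_iff,
      Fin.ext_iff]
    omega

end SimpleGraph

open SimpleGraph

theorem Bgraph_eq_boxProd (n : ℕ) : Bgraph n = pathGraph (n + 1) □ ⊤ := by
  ext ⟨i, b⟩ ⟨j, c⟩
  simp only [Bgraph, fromRel_adj, boxProd_adj, pathGraph_adj, top_adj, ne_eq, Prod.mk.injEq,
    Fin.ext_iff]
  grind

theorem Bgraph_connected (n : ℕ) : (Bgraph n).Connected := by
  rw [Bgraph_eq_boxProd]
  exact (pathGraph_connected n).boxProd connected_top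

theorem Bgraph_dist (n : ℕ) (i j : Fin (n + 1)) (b c : Bool) :
    (Bgraph n).dist (i, b) (j, c) = Nat.dist i j + if b = c then 0 else 1 := by
  rw [Bgraph_eq_boxProd, (pathGraph_connected n).dist_boxProd connected_top, pathGraph_dist,
    dist_top]

theorem Bgraph_degree (n : ℕ) (i : Fin (n + 1)) (b : Bool)
    [Fintype ((pathGraph (n + 1)).neighborSet i)] [Fintype ((Bgraph n).neighborSet (i, b))] :
    (Bgraph n).degree (i, b) = (pathGraph (n + 1)).degree i + 1 := by
  classical
  rw [degree_eq_ncard_neighborSet, Bgraph_eq_boxProd, ← degree_eq_ncard_neighborSet,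
    degree_boxProd]
  simp

theorem sum_range_natDist_zero (n : ℕ) :
    ∑ i ∈ range (n + 1), (Nat.dist i 0 : ℝ) = n * (n + 1) / 2 := by
  induction n with
  | zero => simp
  | succ n ih =>
    rw [sum_range_succ, ih, Nat.dist_zero_right]
    push_cast
    ring

theorem sum_range_natDist_last (n : ℕ) :
    ∑ i ∈ range (n + 1), (Nat.dist i n : ℝ) = n * (n + 1) / 2 := by
  rw [← sum_range_natDist_zero, ← sum_range_reflect]
  refine sum_congr rfl fun i hi => ?_
  rw [mem_range] at hi
  congr 1
  simp only [Nat.dist]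
  omega

theorem sum_range_sum_range_natDist (m : ℕ) :
    ∑ i ∈ range m, ∑ j ∈ range m, (Nat.dist i j : ℝ) = (m ^ 3 - m) / 3 := by
  induction m with
  | zero => simp
  | succ m ih =>
    have hcol : ∑ i ∈ range m, (Nat.dist i m : ℝ) = m * (m + 1) / 2 := by
      simpa [sum_range_succ] using sum_range_natDist_last m
    have hrow : ∑ j ∈ range m, (Nat.dist m j : ℝ) = m * (m + 1) / 2 := by
      simpa only [Nat.dist_comm] using hcol
    simp only [sum_range_succ, sum_add_distrib, ih, hrow, hcol, Nat.dist_self]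
    push_cast
    ring

-- The degree in `B_n²` of the four vertices `((i, b), s)` over position `i`, once `n ≠ 0`.
def prismDegree (n i : ℕ) : ℝ := if i = 0 ∨ i = n then 5 else 7

theorem prismDegree_eq {n : ℕ} (hn : n ≠ 0) (i : ℕ) :
    prismDegree n i = 7 - (if i = 0 then 2 else 0) - (if i = n then 2 else 0) := by
  unfold prismDegree
  split_ifs <;> first | omega | norm_num

theorem sum_prismDegree {n : ℕ} (hn : n ≠ 0) :
    ∑ i ∈ range (n + 1), prismDegree n i = 7 * n + 3 := by
  have h0 : 0 ∈ range (n + 1) := by simp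
  have hn' : n ∈ range (n + 1) := by simp
  simp only [prismDegree_eq hn, sum_sub_distrib, sum_const, card_range, nsmul_eq_mul, sum_ite_eq',
    h0, hn', if_true]
  push_cast
  ring

theorem sum_prismDegree_sq {n : ℕ} (hn : n ≠ 0) :
    ∑ i ∈ range (n + 1), prismDegree n i ^ 2 = 49 * n + 1 := by
  have h0 : 0 ∈ range (n + 1) := by simp
  have hn' : n ∈ range (n + 1) := by simp
  simp only [prismDegree_eq hn, sub_sq, ite_pow, mul_ite, zero_pow two_ne_zero, mul_zero,
    sum_add_distrib, sum_sub_distrib, sum_const, card_range, nsmul_eq_mul, sum_ite_eq', h0, hn',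
    if_true, hn, if_false]
  push_cast
  ring

theorem sum_sum_prismDegree_mul_natDist {n : ℕ} (hn : n ≠ 0) :
    ∑ i ∈ range (n + 1), ∑ j ∈ range (n + 1), prismDegree n i * prismDegree n j * Nat.dist i j
      = 49 * n * (n + 1) * (n + 2) / 3 - 28 * n * (n + 1) + 8 * n := by
  have h0 : 0 ∈ range (n + 1) := by simp
  have hn' : n ∈ range (n + 1) := by simp
  have hrow0 : ∑ j ∈ range (n + 1), (Nat.dist 0 j : ℝ) = n * (n + 1) / 2 := by
    simpa only [Nat.dist_comm] using sum_range_natDist_zero n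
  have hrown : ∑ j ∈ range (n + 1), (Nat.dist n j : ℝ) = n * (n + 1) / 2 := by
    simpa only [Nat.dist_comm] using sum_range_natDist_last n
  simp only [prismDegree_eq hn, sub_mul, mul_sub, ite_mul, mul_ite, zero_mul, mul_zero,
    sum_sub_distrib, ← mul_sum, sum_ite_irrel, sum_const_zero, sum_ite_eq', h0, hn', if_true,
    sum_range_sum_range_natDist, sum_range_natDist_zero, sum_range_natDist_last, hrow0, hrown,
    Nat.dist_zero_left n, Nat.dist_zero_right n, Nat.dist_self]
  push_cast
  ring

theorem two_mul_degree_Bgraph_add_one {n : ℕ} (hn : n ≠ 0) (i : Fin (n + 1)) (b : Bool)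
    [Fintype ((Bgraph n).neighborSet (i, b))] :
    (2 * (Bgraph n).degree (i, b) + 1 : ℝ) = prismDegree n i := by
  classical
  rw [Bgraph_degree, pathGraph_degree hn, prismDegree]
  split_ifs <;> norm_num

theorem sum_bool_Bgraph_dist (n : ℕ) (i j : Fin (n + 1)) :
    ∑ b : Bool, ∑ c : Bool, ((Bgraph n).dist (i, b) (j, c) : ℝ) = 4 * Nat.dist i j + 2 := by
  simp only [Fintype.sum_bool, Bgraph_dist, Nat.cast_add, Nat.cast_ite, Nat.cast_zero,
    Nat.cast_one, if_true, Bool.true_eq_false, Bool.false_eq_true, if_false]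
  ring

theorem gutmanIndex_strongPrism_Bgraph_eq_sum {n : ℕ} (hn : n ≠ 0) :
    gutmanIndex (strongPrism (Bgraph n))
      = 8 * ∑ i ∈ range (n + 1), ∑ j ∈ range (n + 1),
          prismDegree n i * prismDegree n j * Nat.dist i j
        + 4 * (∑ i ∈ range (n + 1), prismDegree n i) ^ 2
        + 2 * ∑ i ∈ range (n + 1), prismDegree n i ^ 2 := by
  rw [(Bgraph_connected n).gutmanIndex_strongPrism]
  simp only [Fintype.sum_prod_type, two_mul_degree_Bgraph_add_one hn]
  rw [Finset.sum_congr rfl fun x _ => Finset.sum_comm]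
  simp only [← Finset.mul_sum]
  simp only [sum_bool_Bgraph_dist, Finset.sum_const, Finset.card_univ, Fintype.card_bool,
    nsmul_eq_mul]
  rw [sq (∑ i ∈ range (n + 1), prismDegree n i), Finset.sum_mul_sum]
  simp only [Finset.sum_range, mul_add, Finset.sum_add_distrib, Finset.mul_sum]
  ring_nf

/-- For `n ≥ 1`, `Gut(B_n²) = (392/3)n³ + 364n² + (1102/3)n + 38`. -/
theorem gutmanIndex_strongPrism_Bgraph (n : ℕ) (hn : 1 ≤ n) :
    gutmanIndex (strongPrism (Bgraph n))
      = 392/3 * (n : ℝ)^3 + 364 * (n : ℝ)^2 + 1102/3 * (n : ℝ) + 38 := by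
  have hn0 : n ≠ 0 := Nat.one_le_iff_ne_zero.mp hn
  rw [gutmanIndex_strongPrism_Bgraph_eq_sum hn0, sum_sum_prismDegree_mul_natDist hn0,
    sum_prismDegree hn0, sum_prismDegree_sq hn0]
  ring
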